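/- For a function f on ℝ³ with f, ∂₂f, ∂₁f, ∂₁∂₂f in L², the mixed norm ‖f‖_{L²_{x₃} L^∞_{x₁} L^∞_{x₂}} (L^∞ in x₂, then L^∞ in x₁, then L² in x₃) is bounded by 2^{3/2} ‖f‖_{L²}^{1/4} ‖∂₁f‖_{L²}^{1/4} ‖∂₂f‖_{L²}^{1/4} ‖∂₁∂₂f‖_{L²}^{1/4}. -/

import Mathlib

/-!
For `g : ℝ → ℝ`, `g(x)²` is `g(y)² + ∫_y^x 2 g g'`, and square integrability makes `g(y)²`
arbitrarily small for some `y ≤ x`; with Cauchy–Schwarz, `g(x)² ≤ 2 ‖g‖₂ ‖g'‖₂`. The same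
argument in `x₁`, run on `x₁ ↦ ∫ u(x₁, x₂)² dx₂`, gives `‖u(x₁, ·)‖₂² ≤ 2 ‖u‖₂ ‖∂₁u‖₂` on `ℝ²`.
Using the first bound in `x₂` and then the second one for `u = f` and `u = ∂₂f` on each plane
`x₃ = const` gives `sup_{x₁,x₂} |f| ≤ 2 (a b c d)^{1/4}`, where `a, b, c, d` are the `L²(ℝ²)` norms
of `f, ∂₁f, ∂₂f, ∂₁∂₂f` on that plane. Hölder's inequality in `x₃` with four exponents `4` and
Fubini then give the bound with constant `2 ≤ 2^{3/2}`.
-/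

open MeasureTheory

/-- Partial derivative in the first coordinate on `ℝ³ = ℝ × ℝ × ℝ`. -/
noncomputable def d1 (f : ℝ × ℝ × ℝ → ℝ) : ℝ × ℝ × ℝ → ℝ :=
  fun x => fderiv ℝ f x (1, 0, 0)

/-- Partial derivative in the second coordinate on `ℝ³ = ℝ × ℝ × ℝ`. -/
noncomputable def d2 (f : ℝ × ℝ × ℝ → ℝ) : ℝ × ℝ × ℝ → ℝ :=
  fun x => fderiv ℝ f x (0, 1, 0)

open scoped ENNReal

theorem eLpNorm_two_sq {α E : Type*} [MeasurableSpace α] [NormedAddCommGroup E]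
    (μ : Measure α) (u : α → E) :
    eLpNorm u 2 μ ^ 2 = ∫⁻ x, ‖u x‖ₑ ^ 2 ∂μ := by
  simpa [ENNReal.rpow_two] using eLpNorm_nnreal_pow_eq_lintegral (μ := μ) (f := u)
    (p := 2) two_ne_zero

theorem lintegral_enorm_mul_le_eLpNorm_mul_eLpNorm {α : Type*} [MeasurableSpace α]
    {μ : Measure α} {u v : α → ℝ} (hu : AEStronglyMeasurable u μ)
    (hv : AEStronglyMeasurable v μ) :
    ∫⁻ x, ‖u x‖ₑ * ‖v x‖ₑ ∂μ ≤ eLpNorm u 2 μ * eLpNorm v 2 μ := by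
  have := eLpNorm_smul_le_mul_eLpNorm (p := 2) (q := 2) (r := 1) hv hu
  simpa [eLpNorm_one_eq_lintegral_enorm, enorm_mul] using this

theorem le_of_forall_le_add_of_lintegral_ne_top {F : ℝ → ℝ≥0∞} {C : ℝ≥0∞}
    (hF : ∫⁻ t, F t ≠ ∞) (hFC : ∀ y x, y ≤ x → F x ≤ F y + C) (x : ℝ) : F x ≤ C := by
  refine ENNReal.le_of_forall_pos_le_add fun ε hε _ => ?_
  obtain ⟨y, hyx, hFy⟩ : ∃ y ≤ x, F y ≤ ε := by
    by_contra! h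
    refine hF (top_unique ?_)
    calc ∞ = ∫⁻ _ in Set.Iic x, (ε : ℝ≥0∞) := by
          simp [Real.volume_Iic, ENNReal.mul_top, hε.ne']
      _ ≤ ∫⁻ t in Set.Iic x, F t := setLIntegral_mono' measurableSet_Iic fun y hy => (h y hy).le
      _ ≤ ∫⁻ t, F t := setLIntegral_le_lintegral _ _
  calc F x ≤ F y + C := hFC y x hyx
    _ ≤ ε + C := by gcongr
    _ = C + ε := add_comm _ _

theorem enorm_sq_le_add_lintegral {g g' : ℝ → ℝ} (hg : ∀ t, HasDerivAt g (g' t) t)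
    (hg' : Continuous g') {y x : ℝ} (hyx : y ≤ x) :
    ‖g x‖ₑ ^ 2 ≤ ‖g y‖ₑ ^ 2 + 2 * ∫⁻ t, ‖g t‖ₑ * ‖g' t‖ₑ := by
  have hcont : Continuous g := Differentiable.continuous fun t => (hg t).differentiableAt
  have hsq : ∀ t, HasDerivAt (fun s => g s ^ 2) (2 * g t * g' t) t := fun t => by
    simpa using (hg t).fun_pow 2
  have hftc : ∫ t in y..x, 2 * g t * g' t = g x ^ 2 - g y ^ 2 :=
    intervalIntegral.integral_eq_sub_of_hasDerivAt (fun t _ => hsq t)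
      (Continuous.intervalIntegrable (by fun_prop) _ _)
  have henorm_sq : ∀ t, ‖g t‖ₑ ^ 2 = ENNReal.ofReal (g t ^ 2) := fun t => by
    rw [Real.enorm_eq_ofReal_abs, ← ENNReal.ofReal_pow (abs_nonneg _), sq_abs]
  calc ‖g x‖ₑ ^ 2 = ENNReal.ofReal (g y ^ 2 + ∫ t in y..x, 2 * g t * g' t) := by
        rw [hftc, henorm_sq]; ring_nf
    _ ≤ ‖g y‖ₑ ^ 2 + ‖∫ t in Set.Ioc y x, 2 * g t * g' t‖ₑ := by
        rw [henorm_sq, intervalIntegral.integral_of_le hyx]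
        exact ENNReal.ofReal_add_le.trans (by gcongr; exact Real.ofReal_le_enorm _)
    _ ≤ ‖g y‖ₑ ^ 2 + ∫⁻ t in Set.Ioc y x, ‖2 * g t * g' t‖ₑ := by
        gcongr; exact enorm_integral_le_lintegral_enorm _
    _ ≤ ‖g y‖ₑ ^ 2 + ∫⁻ t, ‖2 * g t * g' t‖ₑ :=
        add_le_add le_rfl (setLIntegral_le_lintegral _ _)
    _ = ‖g y‖ₑ ^ 2 + 2 * ∫⁻ t, ‖g t‖ₑ * ‖g' t‖ₑ := by
        simp only [enorm_mul, mul_assoc]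
        rw [lintegral_const_mul' _ _ (by simp)]
        simp [Real.enorm_eq_ofReal]

theorem enorm_sq_le_two_mul_eLpNorm_mul_eLpNorm {g g' : ℝ → ℝ}
    (hg : ∀ t, HasDerivAt g (g' t) t) (hg' : Continuous g') (hfin : eLpNorm g 2 volume ≠ ∞)
    (x : ℝ) : ‖g x‖ₑ ^ 2 ≤ 2 * eLpNorm g 2 volume * eLpNorm g' 2 volume := by
  have hcont : Continuous g := Differentiable.continuous fun t => (hg t).differentiableAt
  refine le_of_forall_le_add_of_lintegral_ne_top (F := fun t => ‖g t‖ₑ ^ 2) ?_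
    (fun y x hyx => ?_) x
  · rw [← eLpNorm_two_sq]
    exact ENNReal.pow_ne_top hfin
  · refine (enorm_sq_le_add_lintegral hg hg' hyx).trans ?_
    rw [mul_assoc]
    gcongr
    exact lintegral_enorm_mul_le_eLpNorm_mul_eLpNorm hcont.aestronglyMeasurable
      hg'.aestronglyMeasurable

theorem eLpNorm_line_sq_le {u u' : ℝ × ℝ → ℝ}
    (hu : ∀ p : ℝ × ℝ, HasDerivAt (fun s => u (s, p.2)) (u' p) p.1)
    (hu_cont : Continuous u) (hu' : Continuous u') (hfin : eLpNorm u 2 volume ≠ ∞) (x : ℝ) :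
    eLpNorm (fun y => u (x, y)) 2 volume ^ 2 ≤
      2 * eLpNorm u 2 volume * eLpNorm u' 2 volume := by
  have hu_meas : Measurable u := hu_cont.measurable
  have hu'_meas : Measurable u' := hu'.measurable
  rw [eLpNorm_two_sq]
  refine le_of_forall_le_add_of_lintegral_ne_top (F := fun s => ∫⁻ y, ‖u (s, y)‖ₑ ^ 2) ?_
    (fun a b hab => ?_) x
  · rw [← lintegral_prod (fun p => ‖u p‖ₑ ^ 2) (by fun_prop), ← Measure.volume_eq_prod,
      ← eLpNorm_two_sq]
    exact ENNReal.pow_ne_top hfin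
  calc ∫⁻ y, ‖u (b, y)‖ₑ ^ 2
      ≤ ∫⁻ y, (‖u (a, y)‖ₑ ^ 2 + 2 * ∫⁻ t, ‖u (t, y)‖ₑ * ‖u' (t, y)‖ₑ) :=
        lintegral_mono fun y => enorm_sq_le_add_lintegral (fun t => hu (t, y)) (by fun_prop) hab
    _ = (∫⁻ y, ‖u (a, y)‖ₑ ^ 2) + 2 * ∫⁻ p, ‖u p‖ₑ * ‖u' p‖ₑ := by
        rw [lintegral_add_left (by fun_prop), lintegral_const_mul' _ _ (by simp),
          Measure.volume_eq_prod, lintegral_prod_symm (fun p => ‖u p‖ₑ * ‖u' p‖ₑ) (by fun_prop)]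
    _ ≤ _ := by
        rw [mul_assoc]
        gcongr
        exact lintegral_enorm_mul_le_eLpNorm_mul_eLpNorm hu_cont.aestronglyMeasurable
          hu'.aestronglyMeasurable

theorem lintegral_rpow_mul_four_le {α : Type*} [MeasurableSpace α] {μ : Measure α}
    {a b c d : α → ℝ≥0∞} (ha : AEMeasurable a μ) (hb : AEMeasurable b μ)
    (hc : AEMeasurable c μ) (hd : AEMeasurable d μ) :
    ∫⁻ x, (a x * b x * c x * d x) ^ (4⁻¹ : ℝ) ∂μ ≤
      ((∫⁻ x, a x ∂μ) * (∫⁻ x, b x ∂μ) * (∫⁻ x, c x ∂μ) * (∫⁻ x, d x ∂μ)) ^ (4⁻¹ : ℝ) := by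
  have := ENNReal.lintegral_prod_norm_pow_le (μ := μ) Finset.univ (f := ![a, b, c, d])
    (p := fun _ => 4⁻¹) (by simp [Fin.forall_fin_succ, ha, hb, hc, hd]) (by norm_num)
    (by norm_num)
  simpa [Fin.prod_univ_four, ENNReal.mul_rpow_of_nonneg, mul_assoc] using this

theorem enorm_toReal_eLpNorm_top_le {α E : Type*} [MeasurableSpace α] [NormedAddCommGroup E]
    {μ : Measure α} {g : α → E} {C : ℝ≥0∞} (h : ∀ x, ‖g x‖ₑ ≤ C) :
    ‖(eLpNorm g ∞ μ).toReal‖ₑ ≤ C := by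
  rw [Real.enorm_eq_ofReal ENNReal.toReal_nonneg]
  refine ENNReal.ofReal_toReal_le.trans ?_
  rw [eLpNorm_exponent_top]
  exact eLpNormEssSup_le_of_ae_enorm_bound (ae_of_all _ h)

def sliceAt {α β γ E : Type*} (u : α × β × γ → E) (z : γ) : α × β → E :=
  fun p => u (p.1, p.2, z)

section Slices

variable {α β γ : Type*} [MeasurableSpace α] [MeasurableSpace β] [MeasurableSpace γ]
  {μ : Measure α} {ν : Measure β} {ρ : Measure γ} [SFinite μ] [SFinite ν] [SFinite ρ]

theorem measurable_eLpNorm_sliceAt_sq {u : α × β × γ → ℝ} (hu : Measurable u) :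
    Measurable fun z => eLpNorm (sliceAt u z) 2 (μ.prod ν) ^ 2 := by
  simp_rw [eLpNorm_two_sq, sliceAt]
  exact Measurable.lintegral_prod_left'
    (f := fun q : (α × β) × γ => ‖u (q.1.1, q.1.2, q.2)‖ₑ ^ 2) (by fun_prop)

theorem lintegral_eLpNorm_sliceAt_sq {u : α × β × γ → ℝ} (hu : Measurable u) :
    ∫⁻ z, eLpNorm (sliceAt u z) 2 (μ.prod ν) ^ 2 ∂ρ = eLpNorm u 2 (μ.prod (ν.prod ρ)) ^ 2 := by
  simp_rw [eLpNorm_two_sq, sliceAt]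
  rw [← (measurePreserving_prodAssoc μ ν ρ).lintegral_comp_emb
    (MeasurableEquiv.measurableEmbedding _), lintegral_prod_symm _ (by fun_prop)]
  rfl

theorem ae_eLpNorm_sliceAt_ne_top {u : α × β × γ → ℝ} (hu : Measurable u)
    (hfin : eLpNorm u 2 (μ.prod (ν.prod ρ)) ≠ ∞) :
    ∀ᵐ z ∂ρ, eLpNorm (sliceAt u z) 2 (μ.prod ν) ≠ ∞ := by
  have hsq := ae_lt_top (measurable_eLpNorm_sliceAt_sq (μ := μ) (ν := ν) hu)
    ((lintegral_eLpNorm_sliceAt_sq hu).trans_ne (ENNReal.pow_ne_top hfin))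
  filter_upwards [hsq] with z hz
  exact fun h => by simp [h] at hz

theorem eLpNorm_le_of_ae_enorm_le_sliceAt {E : Type*} [NormedAddCommGroup E] {G : γ → E}
    {u₁ u₂ u₃ u₄ : α × β × γ → ℝ} (h₁ : Measurable u₁) (h₂ : Measurable u₂)
    (h₃ : Measurable u₃) (h₄ : Measurable u₄) {c : ℝ≥0∞}
    (hG : ∀ᵐ z ∂ρ, ‖G z‖ₑ ≤ c * (eLpNorm (sliceAt u₁ z) 2 (μ.prod ν) *
      eLpNorm (sliceAt u₂ z) 2 (μ.prod ν) * eLpNorm (sliceAt u₃ z) 2 (μ.prod ν) *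
      eLpNorm (sliceAt u₄ z) 2 (μ.prod ν)) ^ (4⁻¹ : ℝ)) :
    eLpNorm G 2 ρ ≤ c * (eLpNorm u₁ 2 (μ.prod (ν.prod ρ)) * eLpNorm u₂ 2 (μ.prod (ν.prod ρ)) *
      eLpNorm u₃ 2 (μ.prod (ν.prod ρ)) * eLpNorm u₄ 2 (μ.prod (ν.prod ρ))) ^ (4⁻¹ : ℝ) := by
  have hsq : ∀ x : ℝ≥0∞, (x ^ (4⁻¹ : ℝ)) ^ 2 = (x ^ 2) ^ (4⁻¹ : ℝ) := fun x => by
    rw [← ENNReal.rpow_mul_natCast, mul_comm, ENNReal.rpow_natCast_mul]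
  have m₁ := measurable_eLpNorm_sliceAt_sq (μ := μ) (ν := ν) h₁
  have m₂ := measurable_eLpNorm_sliceAt_sq (μ := μ) (ν := ν) h₂
  have m₃ := measurable_eLpNorm_sliceAt_sq (μ := μ) (ν := ν) h₃
  have m₄ := measurable_eLpNorm_sliceAt_sq (μ := μ) (ν := ν) h₄
  refine (ENNReal.pow_le_pow_left_iff two_ne_zero).1 ?_
  rw [eLpNorm_two_sq]
  calc ∫⁻ z, ‖G z‖ₑ ^ 2 ∂ρ
      ≤ ∫⁻ z, c ^ 2 * (eLpNorm (sliceAt u₁ z) 2 (μ.prod ν) ^ 2 *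
          eLpNorm (sliceAt u₂ z) 2 (μ.prod ν) ^ 2 * eLpNorm (sliceAt u₃ z) 2 (μ.prod ν) ^ 2 *
          eLpNorm (sliceAt u₄ z) 2 (μ.prod ν) ^ 2) ^ (4⁻¹ : ℝ) ∂ρ :=
        lintegral_mono_ae <| hG.mono fun z hz => by
          simpa only [mul_pow, hsq] using pow_le_pow_left' hz 2
    _ = c ^ 2 * ∫⁻ z, (eLpNorm (sliceAt u₁ z) 2 (μ.prod ν) ^ 2 *
          eLpNorm (sliceAt u₂ z) 2 (μ.prod ν) ^ 2 * eLpNorm (sliceAt u₃ z) 2 (μ.prod ν) ^ 2 *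
          eLpNorm (sliceAt u₄ z) 2 (μ.prod ν) ^ 2) ^ (4⁻¹ : ℝ) ∂ρ :=
        lintegral_const_mul _ (by fun_prop)
    _ ≤ c ^ 2 * (eLpNorm u₁ 2 (μ.prod (ν.prod ρ)) ^ 2 * eLpNorm u₂ 2 (μ.prod (ν.prod ρ)) ^ 2 *
          eLpNorm u₃ 2 (μ.prod (ν.prod ρ)) ^ 2 * eLpNorm u₄ 2 (μ.prod (ν.prod ρ)) ^ 2) ^
          (4⁻¹ : ℝ) := by
        gcongr
        refine (lintegral_rpow_mul_four_le m₁.aemeasurable m₂.aemeasurable m₃.aemeasurable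
          m₄.aemeasurable).trans_eq ?_
        rw [lintegral_eLpNorm_sliceAt_sq h₁, lintegral_eLpNorm_sliceAt_sq h₂,
          lintegral_eLpNorm_sliceAt_sq h₃, lintegral_eLpNorm_sliceAt_sq h₄]
    _ = _ := by simp only [mul_pow, hsq]

end Slices

theorem hasDerivAt_d1 {f : ℝ × ℝ × ℝ → ℝ} {x : ℝ × ℝ × ℝ} (hf : DifferentiableAt ℝ f x) :
    HasDerivAt (fun s => f (s, x.2.1, x.2.2)) (d1 f x) x.1 :=
  hf.hasFDerivAt.comp_hasDerivAt x.1
    ((hasDerivAt_id _).prodMk ((hasDerivAt_const _ _).prodMk (hasDerivAt_const _ _)))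

theorem hasDerivAt_d2 {f : ℝ × ℝ × ℝ → ℝ} {x : ℝ × ℝ × ℝ} (hf : DifferentiableAt ℝ f x) :
    HasDerivAt (fun s => f (x.1, s, x.2.2)) (d2 f x) x.2.1 :=
  hf.hasFDerivAt.comp_hasDerivAt x.2.1
    ((hasDerivAt_const _ _).prodMk ((hasDerivAt_id _).prodMk (hasDerivAt_const _ _)))

theorem ContDiff.d1 {m n : WithTop ℕ∞} {f : ℝ × ℝ × ℝ → ℝ} (hf : ContDiff ℝ n f)
    (hmn : m + 1 ≤ n) : ContDiff ℝ m (d1 f) :=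
  (hf.fderiv_right hmn).clm_apply contDiff_const

theorem ContDiff.d2 {m n : WithTop ℕ∞} {f : ℝ × ℝ × ℝ → ℝ} (hf : ContDiff ℝ n f)
    (hmn : m + 1 ≤ n) : ContDiff ℝ m (d2 f) :=
  (hf.fderiv_right hmn).clm_apply contDiff_const

theorem eLpNorm_line_sq_le_sliceAt {g : ℝ × ℝ × ℝ → ℝ} (hg : ContDiff ℝ 1 g) {z : ℝ}
    (hfin : eLpNorm (sliceAt g z) 2 volume ≠ ∞) (x : ℝ) :
    eLpNorm (fun y => g (x, y, z)) 2 volume ^ 2 ≤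
      2 * eLpNorm (sliceAt g z) 2 volume * eLpNorm (sliceAt (d1 g) z) 2 volume := by
  have hg_cont := hg.continuous
  have hd1_cont := (hg.d1 (m := 0) le_rfl).continuous
  exact eLpNorm_line_sq_le
    (fun p => hasDerivAt_d1 (x := (p.1, p.2, z)) (hg.differentiable one_ne_zero _))
    (by unfold sliceAt; fun_prop) (by unfold sliceAt; fun_prop) hfin x

theorem enorm_le_eLpNorm_sliceAt {f : ℝ × ℝ × ℝ → ℝ} (hf : ContDiff ℝ 2 f) {z : ℝ}
    (h0 : eLpNorm (sliceAt f z) 2 volume ≠ ∞) (h1 : eLpNorm (sliceAt (d1 f) z) 2 volume ≠ ∞)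
    (h2 : eLpNorm (sliceAt (d2 f) z) 2 volume ≠ ∞) (x y : ℝ) :
    ‖f (x, y, z)‖ₑ ≤ 2 * (eLpNorm (sliceAt f z) 2 volume *
      eLpNorm (sliceAt (d1 f) z) 2 volume * eLpNorm (sliceAt (d2 f) z) 2 volume *
      eLpNorm (sliceAt (d1 (d2 f)) z) 2 volume) ^ (4⁻¹ : ℝ) := by
  have hf1 : ContDiff ℝ 1 f := hf.of_le one_le_two
  have hd2 : ContDiff ℝ 1 (d2 f) := hf.d2 le_rfl
  have hs := eLpNorm_line_sq_le_sliceAt hf1 h0 x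
  have ht := eLpNorm_line_sq_le_sliceAt hd2 h2 x
  have hs_fin : eLpNorm (fun y => f (x, y, z)) 2 volume ≠ ∞ := by
    have hsq_fin := (hs.trans_lt (by finiteness)).ne
    simpa using hsq_fin
  have hpt := enorm_sq_le_two_mul_eLpNorm_mul_eLpNorm (g := fun y => f (x, y, z))
    (fun t => hasDerivAt_d2 (x := (x, t, z)) (hf1.differentiable one_ne_zero _))
    (hd2.continuous.comp (by fun_prop)) hs_fin y
  have h4 : ‖f (x, y, z)‖ₑ ^ 4 ≤ 16 * (eLpNorm (sliceAt f z) 2 volume *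
      eLpNorm (sliceAt (d1 f) z) 2 volume * eLpNorm (sliceAt (d2 f) z) 2 volume *
      eLpNorm (sliceAt (d1 (d2 f)) z) 2 volume) :=
    calc ‖f (x, y, z)‖ₑ ^ 4 = (‖f (x, y, z)‖ₑ ^ 2) ^ 2 := by ring
      _ ≤ (2 * eLpNorm (fun y => f (x, y, z)) 2 volume *
            eLpNorm (fun y => d2 f (x, y, z)) 2 volume) ^ 2 := by gcongr
      _ = 4 * eLpNorm (fun y => f (x, y, z)) 2 volume ^ 2 *
            eLpNorm (fun y => d2 f (x, y, z)) 2 volume ^ 2 := by ring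
      _ ≤ 4 * (2 * eLpNorm (sliceAt f z) 2 volume * eLpNorm (sliceAt (d1 f) z) 2 volume) *
            (2 * eLpNorm (sliceAt (d2 f) z) 2 volume *
              eLpNorm (sliceAt (d1 (d2 f)) z) 2 volume) := by gcongr
      _ = _ := by ring
  refine (ENNReal.pow_le_pow_left_iff four_ne_zero).1 (h4.trans_eq ?_)
  rw [mul_pow, show (4⁻¹ : ℝ) = ((4 : ℕ) : ℝ)⁻¹ by norm_num,
    ENNReal.rpow_inv_natCast_pow four_ne_zero]
  norm_num

/-- Mixed norm bound:
`‖f‖_{L²_{x₃}L^∞_{x₁}L^∞_{x₂}} ≤ 2^{3/2} ‖f‖^{1/4}‖∂₁f‖^{1/4}‖∂₂f‖^{1/4}‖∂₁∂₂f‖^{1/4}`. -/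
theorem mixed_norm_Linfty_x1x2 (f : ℝ × ℝ × ℝ → ℝ) (hf : ContDiff ℝ 2 f)
    (h0 : MemLp f 2 volume) (h1 : MemLp (d1 f) 2 volume)
    (h2 : MemLp (d2 f) 2 volume) (h12 : MemLp (d1 (d2 f)) 2 volume) :
    (eLpNorm (fun x3 : ℝ =>
        (eLpNorm (fun x1 : ℝ =>
          (eLpNorm (fun x2 : ℝ => f (x1, x2, x3)) ⊤ volume).toReal) ⊤ volume).toReal)
        2 volume).toReal ≤
      (2 : ℝ) ^ ((3:ℝ)/2) * (eLpNorm f 2 volume).toReal ^ ((1:ℝ)/4) *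
        (eLpNorm (d1 f) 2 volume).toReal ^ ((1:ℝ)/4) *
        (eLpNorm (d2 f) 2 volume).toReal ^ ((1:ℝ)/4) *
        (eLpNorm (d1 (d2 f)) 2 volume).toReal ^ ((1:ℝ)/4) := by
  have hm0 : Measurable f := hf.continuous.measurable
  have hm1 : Measurable (d1 f) := (hf.d1 (m := 0) (by norm_num)).continuous.measurable
  have hm2 : Measurable (d2 f) := (hf.d2 (m := 0) (by norm_num)).continuous.measurable
  have hm12 : Measurable (d1 (d2 f)) :=
    ((hf.d2 (m := 1) le_rfl).d1 (m := 0) le_rfl).continuous.measurable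
  have hL := eLpNorm_le_of_ae_enorm_le_sliceAt (μ := volume) (ν := volume) (ρ := volume)
    (c := 2) hm0 hm1 hm2 hm12 (G := fun x3 => (eLpNorm (fun x1 =>
      (eLpNorm (fun x2 => f (x1, x2, x3)) ⊤ volume).toReal) ⊤ volume).toReal) <| by
    filter_upwards [ae_eLpNorm_sliceAt_ne_top hm0 h0.eLpNorm_ne_top,
      ae_eLpNorm_sliceAt_ne_top hm1 h1.eLpNorm_ne_top,
      ae_eLpNorm_sliceAt_ne_top hm2 h2.eLpNorm_ne_top] with z hz0 hz1 hz2
    exact enorm_toReal_eLpNorm_top_le fun x => enorm_toReal_eLpNorm_top_le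
      fun y => enorm_le_eLpNorm_sliceAt hf hz0 hz1 hz2 x y
  rw [← Measure.volume_eq_prod, ← Measure.volume_eq_prod] at hL
  simp only [ENNReal.mul_rpow_of_nonneg _ _ (by norm_num : (0 : ℝ) ≤ 4⁻¹), ← mul_assoc] at hL
  have := h0.eLpNorm_ne_top; have := h1.eLpNorm_ne_top
  have := h2.eLpNorm_ne_top; have := h12.eLpNorm_ne_top
  refine (ENNReal.toReal_mono (by finiteness) hL).trans ?_
  simp only [ENNReal.toReal_mul, ← ENNReal.toReal_rpow, ENNReal.toReal_ofNat, one_div]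
  gcongr
  calc (2 : ℝ) = 2 ^ (1 : ℝ) := (Real.rpow_one 2).symm
    _ ≤ 2 ^ ((3 : ℝ) / 2) := Real.rpow_le_rpow_of_exponent_le (by norm_num) (by norm_num)
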